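/- Let h ∈ H¹(ℝ²) have atomic decomposition h = Σ_j λ_j b_j, where b_j is an atom supported in a square of side L_j. For each j choose r_j > 0 with e² r_j ≤ L_j < e⁸ r_j if r_j < 1 (or e^{2r_j} ≤ L_j < e^{8r_j} if r_j ≥ 1), and set a_j(x₁,x₂,a) = (1/2) r_j⁻¹ 𝟙_{[e^{−r_j}, e^{r_j}]}(a) b_j(x₁,x₂). Then each a_j is an atom in G (supported in the Calderón–Zygmund set Q_j × [e^{−r_j}, e^{r_j}], with sup-norm ≤ ρ-measure inverse and vanishing ρ-integral), and the function f = Σ_j λ_j a_j satisfies ∫₀^∞ f(x₁,x₂,a) da/a = h(x₁,x₂) and ‖f‖_{H¹(G)} ≤ Σ_j |λ_j|. -/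

import Mathlib

/-!
`ρG` is Lebesgue measure on `ℝ²` times the Haar measure `da / a` of `(0, ∞)`, so a product
`k(a) b(x₁, x₂)` is integrated factor by factor. With `k = 𝟙_{[e^{-r}, e^{r}]} / (2r)`, which has
`da / a`-mass one, the lift of `b_j` therefore has vanishing `ρG`-integral and is bounded by
`(2 r_j L_j²)⁻¹ = ρG(Q_j × [e^{-r_j}, e^{r_j}])⁻¹`, and integrating `f` against `da / a` returns
`h`; exchanging that integral with the sum over `j` is allowed because `Σ_j |λ_j b_j(x)| < ∞`.
The norm bound holds because `(λ_j, a_j)` is itself an admissible decomposition of `f`.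
-/

open Set MeasureTheory Real

noncomputable section

abbrev G := ℝ × ℝ × ℝ

/-- The right Haar measure `dρ = a⁻¹ dx₁ dx₂ da` (supported on `a > 0`). -/
def ρG : Measure G :=
  (volume : Measure G).withDensity (fun p => ENNReal.ofReal (if 0 < p.2.2 then p.2.2⁻¹ else 0))

/-- A Calderón–Zygmund set in `G`. -/
def IsCZSet (R : Set G) : Prop :=
  ∃ b₁ b₂ a L r : ℝ, 0 < L ∧ 0 < r ∧ 0 < a ∧
    R = Icc (b₁ - L/2) (b₁ + L/2) ×ˢ Icc (b₂ - L/2) (b₂ + L/2) ×ˢ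
      Icc (a * Real.exp (-r)) (a * Real.exp r) ∧
    ((r < 1 ∧ Real.exp 2 * a * r ≤ L ∧ L < Real.exp 8 * a * r) ∨
     (1 ≤ r ∧ a * Real.exp (2*r) ≤ L ∧ L < a * Real.exp (8*r)))

/-- An atom in `G`: supported in a Calderón–Zygmund set `R`, bounded by `ρ(R)⁻¹`,
integrable with vanishing `ρ`-integral. -/
def IsAtomG (k : G → ℝ) : Prop :=
  ∃ R : Set G, IsCZSet R ∧ (∀ p ∉ R, k p = 0) ∧ (∀ p, |k p| ≤ ((ρG R).toReal)⁻¹) ∧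
    Integrable k ρG ∧ ∫ p, k p ∂ρG = 0

/-- The atomic `H¹(G)` norm: the infimum of `Σ|λ_j|` over atomic decompositions. -/
def H1normG (f : G → ℝ) : ℝ :=
  sInf {s : ℝ | ∃ (lam : ℕ → ℝ) (at_ : ℕ → G → ℝ), (∀ j, IsAtomG (at_ j)) ∧
    (∀ p, HasSum (fun j => lam j * at_ j p) (f p)) ∧ HasSum (fun j => |lam j|) s}

/-- The Haar measure `da / a` of the multiplicative group `(0, ∞)`, as a measure on `ℝ`. -/
def haarIoi : Measure ℝ :=
  volume.withDensity fun a => ENNReal.ofReal (if 0 < a then a⁻¹ else 0)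

instance : SFinite haarIoi := by
  unfold haarIoi
  infer_instance

lemma measurable_density_haarIoi :
    Measurable fun a : ℝ => ENNReal.ofReal (if 0 < a then a⁻¹ else 0) :=
  (Measurable.ite measurableSet_Ioi measurable_inv measurable_const).ennreal_ofReal

lemma ρG_eq_prod : ρG = volume.prod (volume.prod haarIoi) := by
  rw [haarIoi, prod_withDensity_right measurable_density_haarIoi,
    prod_withDensity_right (g := fun z : ℝ × ℝ => ENNReal.ofReal (if 0 < z.2 then z.2⁻¹ else 0))
      (measurable_density_haarIoi.comp measurable_snd)]
  rfl

lemma measurePreserving_prodAssoc_ρG :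
    MeasurePreserving MeasurableEquiv.prodAssoc
      ((volume : Measure (ℝ × ℝ)).prod haarIoi) ρG := by
  rw [ρG_eq_prod, Measure.volume_eq_prod]
  exact measurePreserving_prodAssoc _ _ _

lemma ρG_prod (A B C : Set ℝ) :
    ρG (A ×ˢ B ×ˢ C) = volume A * (volume B * haarIoi C) := by
  rw [ρG_eq_prod, Measure.prod_prod, Measure.prod_prod]

lemma integral_haarIoi (g : ℝ → ℝ) : ∫ a, g a ∂haarIoi = ∫ a in Ioi 0, g a / a := by
  have hdens : Measurable fun a : ℝ => (if 0 < a then a⁻¹ else 0 : ℝ).toNNReal :=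
    (Measurable.ite measurableSet_Ioi measurable_inv measurable_const).real_toNNReal
  rw [haarIoi, ← integral_indicator measurableSet_Ioi]
  refine (integral_withDensity_eq_integral_smul hdens g).trans
    (integral_congr_ae (ae_of_all _ fun a => ?_))
  by_cases ha : 0 < a <;> dsimp only
  · rw [if_pos ha, indicator_of_mem (show a ∈ Ioi 0 from ha), NNReal.smul_def,
      Real.coe_toNNReal _ (inv_nonneg.2 ha.le), smul_eq_mul, div_eq_inv_mul]
  · rw [if_neg ha, indicator_of_notMem (show a ∉ Ioi 0 from ha), Real.toNNReal_zero, zero_smul]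

lemma integral_inv_Icc_exp {r : ℝ} (hr : 0 ≤ r) :
    ∫ a in Icc (exp (-r)) (exp r), a⁻¹ = 2 * r := by
  have hle : exp (-r) ≤ exp r := exp_le_exp.2 (by linarith)
  rw [integral_Icc_eq_integral_Ioc, ← intervalIntegral.integral_of_le hle,
    integral_inv (fun h => (exp_pos (-r)).not_ge (uIcc_of_le hle ▸ h).1), ← exp_sub, log_exp]
  ring

lemma haarIoi_Icc_exp {r : ℝ} (hr : 0 ≤ r) :
    haarIoi (Icc (exp (-r)) (exp r)) = ENNReal.ofReal (2 * r) := by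
  have hpos : ∀ a ∈ Icc (exp (-r)) (exp r), 0 < a := fun a ha => (exp_pos _).trans_le ha.1
  have hint : IntegrableOn (fun a : ℝ => a⁻¹) (Icc (exp (-r)) (exp r)) :=
    (continuousOn_inv₀.mono fun a ha => (hpos a ha).ne').integrableOn_compact isCompact_Icc
  rw [haarIoi, withDensity_apply _ measurableSet_Icc, ← integral_inv_Icc_exp hr,
    ofReal_integral_eq_lintegral_ofReal hint
      ((ae_restrict_mem measurableSet_Icc).mono fun a ha => (inv_pos.2 (hpos a ha)).le)]
  exact setLIntegral_congr_fun measurableSet_Icc fun a ha => by rw [if_pos (hpos a ha)]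

/-- The `a`-profile of the lifted atoms `a_j`. -/
def bump (r a : ℝ) : ℝ :=
  1 / 2 * r⁻¹ * (Icc (exp (-r)) (exp r)).indicator (fun _ => (1 : ℝ)) a

lemma bump_of_notMem {r a : ℝ} (ha : a ∉ Icc (exp (-r)) (exp r)) : bump r a = 0 := by
  rw [bump, indicator_of_notMem ha, mul_zero]

lemma bump_nonneg {r : ℝ} (hr : 0 ≤ r) (a : ℝ) : 0 ≤ bump r a := by
  unfold bump
  exact mul_nonneg (by positivity) (indicator_nonneg (fun _ _ => zero_le_one) a)

lemma bump_le {r : ℝ} (hr : 0 ≤ r) (a : ℝ) : bump r a ≤ 1 / 2 * r⁻¹ := by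
  unfold bump
  exact mul_le_of_le_one_right (by positivity) (indicator_le_self' (fun _ _ => zero_le_one) a)

lemma integrable_bump {r : ℝ} (hr : 0 ≤ r) : Integrable (bump r) haarIoi :=
  ((integrable_indicator_iff measurableSet_Icc).2
    (integrableOn_const (by rw [haarIoi_Icc_exp hr]; exact ENNReal.ofReal_ne_top))).const_mul _

lemma integral_bump {r : ℝ} (hr : 0 < r) : ∫ a, bump r a ∂haarIoi = 1 := by
  simp only [bump]
  rw [integral_const_mul, integral_indicator_const _ measurableSet_Icc, measureReal_def,
    haarIoi_Icc_exp hr.le, ENNReal.toReal_ofReal (by positivity), smul_eq_mul]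
  field_simp

lemma integrable_ρG_mul {k : ℝ → ℝ} {b : ℝ × ℝ → ℝ} (hk : Integrable k haarIoi)
    (hb : Integrable b) : Integrable (fun p : G => k p.2.2 * b (p.1, p.2.1)) ρG := by
  rw [← measurePreserving_prodAssoc_ρG.integrable_comp_emb
    MeasurableEquiv.prodAssoc.measurableEmbedding]
  exact (hb.mul_prod hk).congr (ae_of_all _ fun z => mul_comm _ _)

lemma integral_ρG_mul (k : ℝ → ℝ) (b : ℝ × ℝ → ℝ) :
    ∫ p : G, k p.2.2 * b (p.1, p.2.1) ∂ρG = (∫ a, k a ∂haarIoi) * ∫ x, b x := by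
  rw [← measurePreserving_prodAssoc_ρG.integral_comp', mul_comm, ← integral_prod_mul b k]
  exact integral_congr_ae (ae_of_all _ fun z => mul_comm _ _)

lemma isCZSet_square_prod_Icc_exp (c : ℝ × ℝ) {L r : ℝ} (hL : 0 < L)
    (hr : 0 < r ∧ ((r < 1 ∧ exp 2 * r ≤ L ∧ L < exp 8 * r) ∨
      (1 ≤ r ∧ exp (2 * r) ≤ L ∧ L < exp (8 * r)))) :
    IsCZSet (Icc (c.1 - L / 2) (c.1 + L / 2) ×ˢ Icc (c.2 - L / 2) (c.2 + L / 2) ×ˢ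
      Icc (exp (-r)) (exp r)) :=
  ⟨c.1, c.2, 1, L, r, hL, hr.1, one_pos, by simp only [one_mul], by simpa only [mul_one, one_mul]
    using hr.2⟩

lemma ρG_square_prod_Icc_exp (c : ℝ × ℝ) {L r : ℝ} (hL : 0 ≤ L) (hr : 0 ≤ r) :
    (ρG (Icc (c.1 - L / 2) (c.1 + L / 2) ×ˢ Icc (c.2 - L / 2) (c.2 + L / 2) ×ˢ
      Icc (exp (-r)) (exp r))).toReal = L ^ 2 * (2 * r) := by
  rw [ρG_prod, haarIoi_Icc_exp hr, Real.volume_Icc, Real.volume_Icc, add_sub_sub_cancel,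
    add_sub_sub_cancel, add_halves, ENNReal.toReal_mul, ENNReal.toReal_mul,
    ENNReal.toReal_ofReal hL, ENNReal.toReal_ofReal (by positivity)]
  ring

lemma isAtomG_bump_mul {b : ℝ × ℝ → ℝ} {c : ℝ × ℝ} {L r : ℝ} (hL : 0 < L)
    (hsupp : ∀ x ∉ Icc (c.1 - L / 2) (c.1 + L / 2) ×ˢ Icc (c.2 - L / 2) (c.2 + L / 2),
      b x = 0)
    (hbdd : ∀ x, |b x| ≤ (L ^ 2)⁻¹) (hbint : Integrable b) (hbzero : ∫ x, b x = 0)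
    (hr : 0 < r ∧ ((r < 1 ∧ exp 2 * r ≤ L ∧ L < exp 8 * r) ∨
      (1 ≤ r ∧ exp (2 * r) ≤ L ∧ L < exp (8 * r)))) :
    IsAtomG fun p => bump r p.2.2 * b (p.1, p.2.1) := by
  have hr₀ : 0 ≤ r := hr.1.le
  refine ⟨_, isCZSet_square_prod_Icc_exp c hL hr, fun p hp => ?_, fun p => ?_,
    integrable_ρG_mul (integrable_bump hr₀) hbint, by rw [integral_ρG_mul, hbzero, mul_zero]⟩
  · show bump r p.2.2 * b (p.1, p.2.1) = 0
    by_cases ha : p.2.2 ∈ Icc (exp (-r)) (exp r)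
    · rw [hsupp (p.1, p.2.1) fun hx => hp ⟨hx.1, hx.2, ha⟩, mul_zero]
    · rw [bump_of_notMem ha, zero_mul]
  · rw [ρG_square_prod_Icc_exp c hL.le hr₀, abs_mul, abs_of_nonneg (bump_nonneg hr₀ _)]
    calc bump r p.2.2 * |b (p.1, p.2.1)| ≤ 1 / 2 * r⁻¹ * (L ^ 2)⁻¹ :=
          mul_le_mul (bump_le hr₀ _) (hbdd _) (abs_nonneg _) (by positivity)
      _ = (L ^ 2 * (2 * r))⁻¹ := by field_simp

lemma integral_haarIoi_eq_tsum {r u : ℕ → ℝ} {g : ℝ → ℝ} (hr : ∀ j, 0 < r j)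
    (hu : Summable u) (hg : ∀ a, HasSum (fun j => bump (r j) a * u j) (g a)) :
    ∫ a, g a ∂haarIoi = ∑' j, u j := by
  have hint : ∀ j, Integrable (fun a => bump (r j) a * u j) haarIoi :=
    fun j => (integrable_bump (hr j).le).mul_const _
  have hnorm : ∀ j, ∫ a, ‖bump (r j) a * u j‖ ∂haarIoi = |u j| := fun j => by
    simp only [norm_mul, Real.norm_eq_abs, abs_of_nonneg, bump_nonneg (hr j).le]
    rw [integral_mul_const, integral_bump (hr j), one_mul]
  calc ∫ a, g a ∂haarIoi = ∫ a, ∑' j, bump (r j) a * u j ∂haarIoi :=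
        integral_congr_ae (ae_of_all _ fun a => (hg a).tsum_eq.symm)
    _ = ∑' j, ∫ a, bump (r j) a * u j ∂haarIoi :=
        (integral_tsum_of_summable_integral_norm hint (by simpa only [hnorm] using hu.abs)).symm
    _ = ∑' j, u j := by simp only [integral_mul_const, integral_bump (hr _), one_mul]

lemma H1normG_le_tsum {lam : ℕ → ℝ} {a : ℕ → G → ℝ} {f : G → ℝ} (ha : ∀ j, IsAtomG (a j))
    (hf : ∀ p, HasSum (fun j => lam j * a j p) (f p)) (hlam : Summable fun j => |lam j|) :
    H1normG f ≤ ∑' j, |lam j| := by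
  refine csInf_le ⟨0, ?_⟩ ⟨lam, a, ha, hf, hlam.hasSum⟩
  rintro s ⟨lam', -, -, -, hs⟩
  exact hs.nonneg fun j => abs_nonneg _

/-- Lemma 8.2: given an atomic decomposition `h = Σ λ_j b_j` in `H¹(ℝ²)` (each `b_j`
an atom supported in a square `Q_j` of side `L_j`), numbers `r_j > 0` related to `L_j` by the
Calderón–Zygmund conditions, and `a_j(x₁,x₂,a) = (1/2) r_j⁻¹ 𝟙_{[e^{-r_j},e^{r_j}]}(a) b_j(x₁,x₂)`,
each `a_j` is an atom in `G`, the function `f = Σ λ_j a_j` satisfies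
`∫₀^∞ f(x₁,x₂,a) da/a = h(x₁,x₂)`, and `‖f‖_{H¹(G)} ≤ Σ_j |λ_j|`. -/
theorem lift_H1_R2_to_G
    (lam : ℕ → ℝ) (b : ℕ → (ℝ × ℝ) → ℝ) (c : ℕ → ℝ × ℝ) (L r : ℕ → ℝ)
    (hL : ∀ j, 0 < L j)
    (hsupp : ∀ j, ∀ x : ℝ × ℝ,
      x ∉ Icc ((c j).1 - L j / 2) ((c j).1 + L j / 2) ×ˢ
            Icc ((c j).2 - L j / 2) ((c j).2 + L j / 2) → b j x = 0)
    (hbdd : ∀ j x, |b j x| ≤ ((L j) ^ 2)⁻¹)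
    (hbint : ∀ j, Integrable (b j) (volume : Measure (ℝ × ℝ)))
    (hbzero : ∀ j, ∫ x, b j x ∂(volume : Measure (ℝ × ℝ)) = 0)
    (hr : ∀ j, 0 < r j ∧
      ((r j < 1 ∧ Real.exp 2 * r j ≤ L j ∧ L j < Real.exp 8 * r j) ∨
       (1 ≤ r j ∧ Real.exp (2 * r j) ≤ L j ∧ L j < Real.exp (8 * r j))))
    (hlam : Summable fun j => |lam j|)
    (h : ℝ × ℝ → ℝ) (hh : ∀ x, HasSum (fun j => lam j * b j x) (h x))
    (aG : ℕ → G → ℝ)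
    (haG : ∀ j p, aG j p = (1/2) * (r j)⁻¹ *
      (Icc (Real.exp (-(r j))) (Real.exp (r j))).indicator (fun _ => (1:ℝ)) p.2.2 *
        b j (p.1, p.2.1))
    (f : G → ℝ) (hf : ∀ p, HasSum (fun j => lam j * aG j p) (f p)) :
    (∀ j, IsAtomG (aG j)) ∧
    (∀ x₁ x₂ : ℝ, ∫ a in Ioi (0 : ℝ), f (x₁, x₂, a) / a = h (x₁, x₂)) ∧
    H1normG f ≤ ∑' j, |lam j| := by
  have haG_bump : ∀ j, aG j = fun p => bump (r j) p.2.2 * b j (p.1, p.2.1) :=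
    fun j => funext (haG j)
  have hatom : ∀ j, IsAtomG (aG j) := fun j => by
    rw [haG_bump]
    exact isAtomG_bump_mul (hL j) (hsupp j) (hbdd j) (hbint j) (hbzero j) (hr j)
  refine ⟨hatom, fun x₁ x₂ => ?_, H1normG_le_tsum hatom hf hlam⟩
  rw [← integral_haarIoi, ← (hh (x₁, x₂)).tsum_eq]
  refine integral_haarIoi_eq_tsum (fun j => (hr j).1) (hh (x₁, x₂)).summable fun a => ?_
  convert hf (x₁, x₂, a) using 2 with j
  rw [haG_bump, mul_left_comm]
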